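/- Let a, b ∈ ℝ and c > 0 with c ≥ max{a, b} and c ≥ a + 2. If a(a+1) ≥ 0 then the function z ↦ z^{-a} F(a,b;c;z^{-1}) is convex on (1,∞), and if a(a+1) ≤ 0 then it is concave on (1,∞). -/

import Mathlib

open Real Set MeasureTheory

/-- Pochhammer symbol (rising factorial) for a real argument. -/
noncomputable def poch (x : ℝ) (n : ℕ) : ℝ := ∏ i ∈ Finset.range n, (x + i)

lemma poch_zero (x : ℝ) : poch x 0 = 1 := by simp [poch]

lemma poch_succ (x : ℝ) (n : ℕ) : poch x (n+1) = poch x n * (x + n) := by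
  simp [poch, Finset.prod_range_succ]

lemma poch_one (x : ℝ) : poch x 1 = x := by simp [poch]

lemma poch_add (x : ℝ) (k m : ℕ) : poch x (k+m) = poch x k * poch (x+k) m := by
  simp only [poch, Finset.prod_range_add]
  congr 1
  apply Finset.prod_congr rfl
  intro i _
  push_cast
  ring

lemma poch_succ' (x : ℝ) (m : ℕ) : poch x (m+1) = x * poch (x+1) m := by
  have h := poch_add x 1 m
  rw [add_comm 1 m] at h
  simpa [poch_one] using h

lemma poch_nonneg {x : ℝ} (hx : 0 ≤ x) (n : ℕ) : 0 ≤ poch x n :=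
  Finset.prod_nonneg fun i _ => by positivity

lemma poch_pos {x : ℝ} (hx : 0 < x) (n : ℕ) : 0 < poch x n :=
  Finset.prod_pos fun i _ => by positivity

/-! ### Chu–Vandermonde -/

noncomputable def chuT (p q : ℝ) (n k : ℕ) : ℝ := (n.choose k : ℝ) * poch p k * poch q (n-k)

noncomputable def chuW (p q : ℝ) (n : ℕ) : ℕ → ℝ
  | 0 => 0
  | (j+1) => -((n.choose j : ℝ) * poch p (j+1) * poch q (n-j))

lemma chu_step (p q : ℝ) (n k : ℕ) (hk : k ≤ n+1) :
    chuT p q (n+1) k = (p+q+n) * chuT p q n k + chuW p q n (k+1) - chuW p q n k := by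
  match k with
  | 0 =>
    simp only [chuT, chuW, Nat.choose_zero_right, Nat.cast_one, Nat.sub_zero, poch_zero,
      poch_succ, poch_one]
    ring
  | (j+1) =>
    rcases Nat.lt_or_ge (j+1) (n+1) with hj | hj
    · have hjn : j + 1 ≤ n := by omega
      obtain ⟨m, hm⟩ : ∃ m, n = j + 1 + m := ⟨n - (j+1), by omega⟩
      subst hm
      have e1 : j + 1 + m + 1 - (j+1) = m + 1 := by omega
      have e2 : j + 1 + m - (j+1) = m := by omega
      have e3 : j + 1 + m - j = m + 1 := by omega
      have hpascal : (((j+1+m)+1).choose (j+1) : ℝ)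
          = ((j+1+m).choose j : ℝ) + ((j+1+m).choose (j+1) : ℝ) := by
        rw [Nat.choose_succ_succ]
        push_cast; ring
      simp only [chuT, chuW, e1, e2, e3]
      rw [hpascal]
      simp only [poch_succ]
      push_cast
      ring
    · obtain rfl : j = n := by omega
      simp only [chuT, chuW, Nat.choose_self, Nat.choose_succ_self, Nat.sub_self,
        poch_zero, Nat.cast_one, Nat.cast_zero]
      ring

lemma chu_vandermonde (p q : ℝ) (n : ℕ) :
    ∑ k ∈ Finset.range (n+1), chuT p q n k = poch (p+q) n := by
  induction n with
  | zero => simp [chuT, poch_zero]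
  | succ n ih =>
    have hstep : ∀ k ∈ Finset.range (n+2),
        chuT p q (n+1) k = (p+q+n) * chuT p q n k + (chuW p q n (k+1) - chuW p q n k) := by
      intro k hk
      have := chu_step p q n k (by simpa using Nat.lt_succ_iff.mp (Finset.mem_range.mp hk))
      linarith [this]
    rw [Finset.sum_congr rfl hstep, Finset.sum_add_distrib, Finset.sum_range_sub (chuW p q n)]
    have htop : chuT p q n (n+1) = 0 := by
      simp [chuT, Nat.choose_eq_zero_of_lt]
    have hWtop : chuW p q n (n+2) = 0 := by
      simp [chuW, Nat.choose_eq_zero_of_lt]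
    have hW0 : chuW p q n 0 = 0 := rfl
    rw [hWtop, hW0, Finset.sum_range_succ, htop, ← Finset.mul_sum, ih, poch_succ]
    ring

/-! ### Saalschütz-type identity (coefficients of the Euler transformation) -/

noncomputable def sT (x y c : ℝ) (n k : ℕ) : ℝ :=
  (n.choose k : ℝ) * poch (c-x) k * poch (c-y) k * poch (x+y-c) (n-k) * poch (c+k) (n-k)

noncomputable def sW (x y c : ℝ) (n : ℕ) : ℕ → ℝ
  | 0 => 0
  | (j+1) => -((n.choose j : ℝ) * poch (c-x) (j+1) * poch (c-y) (j+1) *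
      poch (x+y-c) (n-j) * poch (c+j) (n-j))

lemma s_step (x y c : ℝ) (n k : ℕ) (hk : k ≤ n+1) :
    sT x y c (n+1) k = (x+n)*(y+n) * sT x y c n k + sW x y c n (k+1) - sW x y c n k := by
  match k with
  | 0 =>
    simp only [sT, sW, Nat.choose_zero_right, Nat.cast_one, Nat.sub_zero, poch_zero,
      poch_succ, poch_one, Nat.cast_zero]
    ring
  | (j+1) =>
    rcases Nat.lt_or_ge (j+1) (n+1) with hj | hj
    · have hjn : j + 1 ≤ n := by omega
      obtain ⟨m, hm⟩ : ∃ m, n = j + 1 + m := ⟨n - (j+1), by omega⟩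
      subst hm
      have e1 : j + 1 + m + 1 - (j+1) = m + 1 := by omega
      have e2 : j + 1 + m - (j+1) = m := by omega
      have e3 : j + 1 + m - j = m + 1 := by omega
      have hch : ((j+1+m).choose (j+1) : ℝ) * (j+1) = ((j+1+m).choose j : ℝ) * (m+1) := by
        have h := Nat.choose_succ_right_eq (j+1+m) j
        have e4 : j + 1 + m - j = m + 1 := by omega
        rw [e4] at h
        exact_mod_cast congrArg (Nat.cast : ℕ → ℝ) h
      have hpascal : (((j+1+m)+1).choose (j+1) : ℝ)
          = ((j+1+m).choose j : ℝ) + ((j+1+m).choose (j+1) : ℝ) := by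
        rw [Nat.choose_succ_succ]
        push_cast; ring
      simp only [sT, sW, e1, e2, e3]
      push_cast
      rw [show c + ((j:ℝ) + 1) = c + (j:ℝ) + 1 from by ring]
      rw [hpascal, poch_succ (x+y-c) m, poch_succ (c-x) (j+1), poch_succ (c-y) (j+1),
        poch_succ (c + (j:ℝ) + 1) m, poch_succ' (c + (j:ℝ)) m]
      push_cast
      linear_combination (-(poch (c-x) (j+1) * poch (c-y) (j+1) * poch (x+y-c) m *
        poch (c+(j:ℝ)+1) m * (x+y-c+(m:ℝ)))) * hch
    · obtain rfl : j = n := by omega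
      simp only [sT, sW, Nat.choose_self, Nat.choose_succ_self, Nat.sub_self,
        poch_zero, Nat.cast_one, Nat.cast_zero]
      ring

lemma saalschutz (x y c : ℝ) (n : ℕ) :
    ∑ k ∈ Finset.range (n+1), sT x y c n k = poch x n * poch y n := by
  induction n with
  | zero => simp [sT, poch_zero]
  | succ n ih =>
    have hstep : ∀ k ∈ Finset.range (n+2),
        sT x y c (n+1) k = (x+n)*(y+n) * sT x y c n k + (sW x y c n (k+1) - sW x y c n k) := by
      intro k hk
      have := s_step x y c n k (by simpa using Nat.lt_succ_iff.mp (Finset.mem_range.mp hk))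
      linarith [this]
    rw [Finset.sum_congr rfl hstep, Finset.sum_add_distrib, Finset.sum_range_sub (sW x y c n)]
    have htop : sT x y c n (n+1) = 0 := by
      simp [sT, Nat.choose_eq_zero_of_lt]
    have hWtop : sW x y c n (n+2) = 0 := by
      simp [sW, Nat.choose_eq_zero_of_lt]
    have hW0 : sW x y c n 0 = 0 := rfl
    rw [hWtop, hW0, Finset.sum_range_succ, htop, ← Finset.mul_sum, ih, poch_succ, poch_succ]
    ring

/-- helper : m^A * (m + A) ≤ m * (m+1)^A in ℕ for 1 ≤ m -/
lemma nat_pow_ineq (A m : ℕ) (hm : 1 ≤ m) : m^A * (m + A) ≤ m * (m+1)^A := by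
  induction A with
  | zero => simp
  | succ A ih =>
    have h1 : m^(A+1) * (m + (A+1)) = m * (m^A * (m+A)) + m * m^A := by ring
    have h2 : m^A ≤ (m+1)^A := Nat.pow_le_pow_left (by omega) A
    calc m^(A+1) * (m + (A+1)) = m * (m^A * (m+A)) + m * m^A := h1
      _ ≤ m * (m * (m+1)^A) + m * (m+1)^A := by
          have := Nat.mul_le_mul_left m ih
          have := Nat.mul_le_mul_left m h2
          omega
      _ = m * (m+1)^(A+1) := by ring

lemma poch_abs_le (a : ℝ) (A : ℕ) (hA : |a| ≤ A) (n : ℕ) :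
    |poch a n| ≤ (n.factorial : ℝ) * (n+1)^A := by
  induction n with
  | zero => simp [poch_zero]
  | succ n ih =>
    rw [poch_succ, abs_mul]
    have h1 : |a + n| ≤ (A : ℝ) + n + 1 := by
      calc |a + n| ≤ |a| + n := by
            refine (abs_add_le _ _).trans ?_
            simp [Nat.abs_cast]
      _ ≤ (A : ℝ) + n + 1 := by linarith
    have keyN := nat_pow_ineq A (n+1) (by omega)
    have key : ((n:ℝ)+1)^A * (((n:ℝ)+1) + A) ≤ ((n:ℝ)+1) * ((n:ℝ)+2)^A := by
      have := (Nat.cast_le (α := ℝ)).2 keyN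
      push_cast at this
      have e : ((n:ℝ)+1+1) = ((n:ℝ)+2) := by ring
      rw [e] at this
      linarith
    have hfacc : ((n+1).factorial : ℝ) = (n.factorial : ℝ) * ((n:ℝ)+1) := by
      rw [Nat.factorial_succ]; push_cast; ring
    have hpos : (0:ℝ) ≤ (n.factorial : ℝ) := by positivity
    have step1 : |poch a n| * |a + n| ≤ ((n.factorial : ℝ) * ((n:ℝ)+1)^A) * ((A : ℝ) + ((n:ℝ)+1)) := by
      apply mul_le_mul ih _ (abs_nonneg _) (by positivity)
      push_cast at h1 ⊢
      linarith
    have step2 : ((n.factorial : ℝ) * ((n:ℝ)+1)^A) * ((A : ℝ) + ((n:ℝ)+1))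
        ≤ (n.factorial : ℝ) * (((n:ℝ)+1) * ((n:ℝ)+2)^A) := by
      rw [mul_assoc]
      apply mul_le_mul_of_nonneg_left _ hpos
      calc ((n:ℝ)+1)^A * ((A : ℝ) + ((n:ℝ)+1)) = ((n:ℝ)+1)^A * (((n:ℝ)+1) + A) := by ring
        _ ≤ ((n:ℝ)+1) * ((n:ℝ)+2)^A := key
    calc |poch a n| * |a + n| ≤ (n.factorial : ℝ) * (((n:ℝ)+1) * ((n:ℝ)+2)^A) :=
          le_trans step1 step2
      _ = ((n+1).factorial : ℝ) * (((n:ℕ)+1:ℕ)+1)^A := by rw [hfacc]; push_cast; ring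

lemma poch_lower {c : ℝ} (hc : 0 < c) (n : ℕ) : c * n.factorial ≤ poch c (n+1) := by
  induction n with
  | zero => simp [poch_succ, poch_zero]
  | succ n ih =>
    have hstep : poch c (n+2) = poch c (n+1) * (c + ((n:ℝ)+1)) := by
      rw [poch_succ c (n+1)]; push_cast; ring
    have h1 : ((n:ℝ)+1) ≤ c + ((n:ℝ)+1) := by linarith
    have h2 : c * ((n+1).factorial : ℝ) = (c * n.factorial) * ((n:ℝ)+1) := by
      rw [Nat.factorial_succ]; push_cast; ring
    rw [hstep, h2]
    apply mul_le_mul ih h1 (by positivity) (le_of_lt (poch_pos hc _))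

lemma coeff_bound {a b c : ℝ} (hc : 0 < c) (A B : ℕ) (hA : |a| ≤ A) (hB : |b| ≤ B) (n : ℕ) :
    |poch a n * poch b n / (poch c n * n.factorial)| ≤ (max 1 c⁻¹) * (n+1)^(A+B+1) := by
  have hM1 : (1:ℝ) ≤ max 1 c⁻¹ := le_max_left _ _
  match n with
  | 0 => simp [poch_zero]
  | (n+1) =>
    have hpc : (0:ℝ) < poch c (n+1) := poch_pos hc _
    have hden : (0:ℝ) < poch c (n+1) * (n+1).factorial := by positivity
    rw [abs_div, abs_mul, abs_of_pos hden, div_le_iff₀ hden]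
    have hfl : c * n.factorial ≤ poch c (n+1) := poch_lower hc n
    have hb1 : |poch a (n+1)| ≤ ((n+1).factorial : ℝ) * ((n:ℝ)+2)^A := by
      have := poch_abs_le a A hA (n+1); push_cast at this ⊢
      have e : ((n:ℝ)+1+1) = ((n:ℝ)+2) := by ring
      rw [e] at this; linarith
    have hb2 : |poch b (n+1)| ≤ ((n+1).factorial : ℝ) * ((n:ℝ)+2)^B := by
      have := poch_abs_le b B hB (n+1); push_cast at this ⊢
      have e : ((n:ℝ)+1+1) = ((n:ℝ)+2) := by ring
      rw [e] at this; linarith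
    set M : ℝ := max 1 c⁻¹ with hM
    have hM0 : (0:ℝ) < M := by linarith
    have hfacc : ((n+1).factorial : ℝ) = (n.factorial : ℝ) * ((n:ℝ)+1) := by
      rw [Nat.factorial_succ]; push_cast; ring
    have hcinv : (n.factorial : ℝ) ≤ c⁻¹ * poch c (n+1) := by
      rw [le_inv_mul_iff₀ hc]; linarith
    have hMp : (n.factorial : ℝ) ≤ M * poch c (n+1) := by
      have hc' : c⁻¹ ≤ M := le_max_right _ _
      calc (n.factorial : ℝ) ≤ c⁻¹ * poch c (n+1) := hcinv
        _ ≤ M * poch c (n+1) := by apply mul_le_mul_of_nonneg_right hc' (le_of_lt hpc)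
    have h4 : (n.factorial : ℝ) * ((n:ℝ)+1) ≤ M * poch c (n+1) * ((n:ℝ)+2) := by
      apply mul_le_mul hMp (by linarith) (by positivity)
      positivity
    have key : ((n+1).factorial : ℝ) * ((n:ℝ)+2)^A * (((n+1).factorial : ℝ) * ((n:ℝ)+2)^B)
        ≤ M * ((n:ℝ)+2)^(A+B+1) * (poch c (n+1) * (n+1).factorial) := by
      have e1 : ((n:ℝ)+2)^(A+B+1) = ((n:ℝ)+2)^A * ((n:ℝ)+2)^B * ((n:ℝ)+2) := by
        rw [pow_add, pow_add]; ring
      rw [e1, hfacc]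
      have hnn : (0:ℝ) ≤ ((n.factorial : ℝ) * ((n:ℝ)+1)) * (((n:ℝ)+2)^A * ((n:ℝ)+2)^B) := by
        positivity
      calc (n.factorial : ℝ) * ((n:ℝ)+1) * ((n:ℝ)+2)^A * ((n.factorial : ℝ) * ((n:ℝ)+1) * ((n:ℝ)+2)^B)
          = ((n.factorial : ℝ) * ((n:ℝ)+1)) * (((n.factorial : ℝ) * ((n:ℝ)+1)) * (((n:ℝ)+2)^A * ((n:ℝ)+2)^B)) := by
            ring
        _ ≤ (M * poch c (n+1) * ((n:ℝ)+2)) * (((n.factorial : ℝ) * ((n:ℝ)+1)) * (((n:ℝ)+2)^A * ((n:ℝ)+2)^B)) := by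
            apply mul_le_mul_of_nonneg_right h4 hnn
        _ = M * (((n:ℝ)+2)^A * ((n:ℝ)+2)^B * ((n:ℝ)+2)) * (poch c (n+1) * ((n.factorial : ℝ) * ((n:ℝ)+1))) := by
            ring
    calc |poch a (n+1)| * |poch b (n+1)|
        ≤ ((n+1).factorial : ℝ) * ((n:ℝ)+2)^A * (((n+1).factorial : ℝ) * ((n:ℝ)+2)^B) := by
          apply mul_le_mul hb1 hb2 (abs_nonneg _) (by positivity)
      _ ≤ M * ((n:ℝ)+2)^(A+B+1) * (poch c (n+1) * (n+1).factorial) := key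
      _ = M * (((n:ℕ)+1:ℕ)+1:ℝ)^(A+B+1) * (poch c (n+1) * (n+1).factorial) := by push_cast; ring

lemma summable_aux {r : ℝ} (hr0 : 0 < r) (hr1 : r < 1) (m : ℕ) :
    Summable (fun n : ℕ => ((n:ℝ)+1)^m * r^n) := by
  have h : Summable (fun n : ℕ => ((n:ℝ))^m * r^n) := by
    apply summable_pow_mul_geometric_of_norm_lt_one
    rw [Real.norm_eq_abs, abs_of_pos hr0]; exact hr1
  have h2 : Summable (fun n : ℕ => (((n+1:ℕ)):ℝ)^m * r^(n+1)) := (summable_nat_add_iff 1).2 h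
  have h3 := h2.mul_left r⁻¹
  apply h3.congr
  intro n
  push_cast
  field_simp
  ring

lemma hasDerivAt_psum {d : ℕ → ℝ} {K : ℝ} {m : ℕ}
    (hd : ∀ n, |d n| ≤ K * ((n:ℝ)+1)^m) (p : ℝ) {x : ℝ} (hx : 1 < x) :
    HasDerivAt (fun z : ℝ => ∑' n : ℕ, d n * z ^ (p - (n:ℝ)))
      (∑' n : ℕ, d n * (p - (n:ℝ)) * x ^ (p - 1 - (n:ℝ))) x := by
  have hK0 : 0 ≤ K := by
    have h0 := hd 0
    have h1 := abs_nonneg (d 0)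
    simp at h0
    linarith
  set r : ℝ := (1+x)/2 with hrdef
  set R : ℝ := x+1 with hRdef
  have hr1 : 1 < r := by rw [hrdef]; linarith
  have hr0 : 0 < r := by linarith
  have hrx : r < x := by rw [hrdef]; linarith
  have hxR : x < R := by rw [hRdef]; linarith
  have hrinv1 : r⁻¹ < 1 := by
    rw [inv_lt_one_iff₀]; right; exact hr1
  have hxinv1 : x⁻¹ < 1 := by
    rw [inv_lt_one_iff₀]; right; exact hx
  have hx0 : (0:ℝ) < x := by linarith
  set C : ℝ := max (r^(p-1)) (R^(p-1)) with hCdef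
  have hC0 : 0 < C := lt_max_of_lt_left (Real.rpow_pos_of_pos hr0 _)
  set u : ℕ → ℝ := fun n => (K * (|p|+1) * C) * (((n:ℝ)+1)^(m+1) * (r⁻¹)^n) with hudef
  have hu : Summable u := (summable_aux (by positivity) hrinv1 (m+1)).mul_left _
  have hg : ∀ (n : ℕ) (z : ℝ), z ∈ Ioo r R →
      HasDerivAt (fun z : ℝ => d n * z ^ (p - (n:ℝ))) (d n * (p - (n:ℝ)) * z ^ (p - 1 - (n:ℝ))) z := by
    intro n z hz
    have hz0 : 0 < z := lt_trans hr0 hz.1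
    have h := (Real.hasDerivAt_rpow_const (x:=z) (p:=p - (n:ℝ)) (Or.inl hz0.ne')).const_mul (d n)
    have e : p - 1 - (n:ℝ) = p - (n:ℝ) - 1 := by ring
    rw [e]
    rw [show d n * (p - (n:ℝ)) * z ^ (p - (n:ℝ) - 1) = d n * ((p - (n:ℝ)) * z ^ (p - (n:ℝ) - 1)) by ring]
    exact h
  have key_split : ∀ (n : ℕ) (z : ℝ), 0 < z → z ^ (p - 1 - (n:ℝ)) = z^(p-1) * ((z^n)⁻¹) := by
    intro n z hz0
    rw [show p - 1 - (n:ℝ) = (p-1) + (-(n:ℝ)) from by ring, Real.rpow_add hz0,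
      Real.rpow_neg hz0.le, Real.rpow_natCast]
  have hg' : ∀ (n : ℕ) (z : ℝ), z ∈ Ioo r R →
      ‖d n * (p - (n:ℝ)) * z ^ (p - 1 - (n:ℝ))‖ ≤ u n := by
    intro n z hz
    have hz0 : 0 < z := lt_trans hr0 hz.1
    have hzr : r ≤ z := le_of_lt hz.1
    have hzR : z ≤ R := le_of_lt hz.2
    have hrp : (0:ℝ) < z ^ (p - 1 - (n:ℝ)) := Real.rpow_pos_of_pos hz0 _
    rw [Real.norm_eq_abs, abs_mul, abs_mul, abs_of_pos hrp, key_split n z hz0]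
    have b2 : z^(p-1) ≤ C := by
      rcases le_or_gt 0 (p-1) with h | h
      · exact le_trans (Real.rpow_le_rpow hz0.le hzR h) (le_max_right _ _)
      · exact le_trans (Real.rpow_le_rpow_of_nonpos hr0 hzr h.le) (le_max_left _ _)
    have b3 : (z^n)⁻¹ ≤ (r⁻¹)^n := by
      rw [inv_pow]
      exact inv_anti₀ (pow_pos hr0 n) (pow_le_pow_left₀ hr0.le hzr n)
    have b4 : |p - (n:ℝ)| ≤ (|p|+1)*((n:ℝ)+1) := by
      have h1 : |p - (n:ℝ)| ≤ |p| + (n:ℝ) := by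
        refine (abs_sub _ _).trans ?_
        simp [Nat.abs_cast]
      nlinarith [abs_nonneg p, Nat.cast_nonneg (α := ℝ) n]
    have m1 : |d n| * |p - (n:ℝ)| ≤ (K * ((n:ℝ)+1)^m) * ((|p|+1)*((n:ℝ)+1)) :=
      mul_le_mul (hd n) b4 (abs_nonneg _) (le_trans (abs_nonneg _) (hd n))
    have m2 : z^(p-1) * ((z^n)⁻¹) ≤ C * (r⁻¹)^n := by
      apply mul_le_mul b2 b3 (by positivity) (le_of_lt hC0)
    calc |d n| * |p - (n:ℝ)| * (z^(p-1) * ((z^n)⁻¹))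
        ≤ ((K * ((n:ℝ)+1)^m) * ((|p|+1)*((n:ℝ)+1))) * (C * (r⁻¹)^n) := by
          apply mul_le_mul m1 m2 (by positivity) (by positivity)
      _ = u n := by rw [hudef]; simp only []; rw [pow_succ]; ring
  have hg0 : Summable (fun n : ℕ => d n * x ^ (p - (n:ℝ))) := by
    apply Summable.of_norm_bounded (g := fun n : ℕ => (K * x^p) * (((n:ℝ)+1)^m * (x⁻¹)^n))
      ((summable_aux (by positivity) hxinv1 m).mul_left _)
    intro n
    rw [Real.norm_eq_abs, abs_mul]
    have e : x ^ (p - (n:ℝ)) = x^p * ((x^n)⁻¹) := by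
      rw [show p - (n:ℝ) = p + (-(n:ℝ)) from by ring, Real.rpow_add hx0,
        Real.rpow_neg hx0.le, Real.rpow_natCast]
    have hrp : (0:ℝ) < x ^ (p - (n:ℝ)) := Real.rpow_pos_of_pos hx0 _
    rw [abs_of_pos hrp, e]
    have m1 : |d n| * (x^p * ((x^n)⁻¹)) ≤ (K * ((n:ℝ)+1)^m) * (x^p * ((x^n)⁻¹)) := by
      apply mul_le_mul_of_nonneg_right (hd n) (by positivity)
    calc |d n| * (x^p * ((x^n)⁻¹)) ≤ (K * ((n:ℝ)+1)^m) * (x^p * ((x^n)⁻¹)) := m1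
      _ = (K * x^p) * (((n:ℝ)+1)^m * (x⁻¹)^n) := by rw [inv_pow]; ring
  exact hasDerivAt_tsum_of_isPreconnected hu isOpen_Ioo (convex_Ioo r R).isPreconnected
    hg hg' (Set.mem_Ioo.mpr ⟨hrx, hxR⟩) hg0 (Set.mem_Ioo.mpr ⟨hrx, hxR⟩)


/-! ### hyperF and its coefficients -/

/-- Gauss hypergeometric series. -/
noncomputable def hyperF (a b c z : ℝ) : ℝ :=
  ∑' n : ℕ, poch a n * poch b n / (poch c n * (n.factorial : ℝ)) * z ^ n

noncomputable def dcoef (a b c : ℝ) (n : ℕ) : ℝ :=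
  poch a n * poch b n / (poch c n * (n.factorial : ℝ))

lemma hyperF_eq (a b c z : ℝ) : hyperF a b c z = ∑' n : ℕ, dcoef a b c n * z ^ n := rfl

lemma poch_one_fact (n : ℕ) : poch 1 n = (n.factorial : ℝ) := by
  induction n with
  | zero => simp [poch_zero]
  | succ n ih =>
    rw [poch_succ, ih, Nat.factorial_succ]
    push_cast
    ring

lemma dcoef_B (p : ℝ) (n : ℕ) : dcoef p 1 1 n = poch p n / (n.factorial : ℝ) := by
  have h : (n.factorial : ℝ) ≠ 0 := by positivity
  rw [dcoef, poch_one_fact]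
  field_simp

lemma summable_norm_hyper {a b c w : ℝ} (hc : 0 < c) (hw : |w| < 1) :
    Summable (fun n : ℕ => ‖dcoef a b c n * w^n‖) := by
  set A : ℕ := ⌈|a|⌉₊
  set B : ℕ := ⌈|b|⌉₊
  set K : ℝ := max 1 c⁻¹ with hK
  set r : ℝ := (|w|+1)/2 with hr
  have hr0 : 0 < r := by rw [hr]; positivity
  have hr1 : r < 1 := by rw [hr]; linarith
  have hwr : |w| ≤ r := by rw [hr]; linarith [abs_nonneg w]
  have hsum := (summable_aux hr0 hr1 (A+B+1)).mul_left K
  apply Summable.of_nonneg_of_le (fun n => norm_nonneg _) _ hsum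
  intro n
  rw [Real.norm_eq_abs, abs_mul, abs_pow]
  calc |dcoef a b c n| * |w|^n ≤ (K * ((n:ℝ)+1)^(A+B+1)) * r^n := by
        apply mul_le_mul (coeff_bound hc A B (Nat.le_ceil _) (Nat.le_ceil _) n)
          (pow_le_pow_left₀ (abs_nonneg w) hwr n) (by positivity)
        have h1 : (1:ℝ) ≤ K := le_max_left _ _
        positivity
    _ = K * (((n:ℝ)+1)^(A+B+1) * r^n) := by ring

lemma cauchy_hyper {a b c p w : ℝ} (hc : 0 < c) (hw : |w| < 1) :
    hyperF a b c w * hyperF p 1 1 w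
      = ∑' n : ℕ, (∑ k ∈ Finset.range (n+1), dcoef a b c k * dcoef p 1 1 (n-k)) * w^n := by
  rw [hyperF_eq, hyperF_eq,
    tsum_mul_tsum_eq_tsum_sum_range_of_summable_norm (summable_norm_hyper hc hw)
      (summable_norm_hyper one_pos hw)]
  apply tsum_congr
  intro n
  rw [Finset.sum_mul]
  apply Finset.sum_congr rfl
  intro k hk
  have hkn : k ≤ n := Nat.lt_succ_iff.mp (Finset.mem_range.mp hk)
  have hpow : w^k * w^(n-k) = w^n := by
    rw [← pow_add]
    congr 1
    omega
  calc dcoef a b c k * w^k * (dcoef p 1 1 (n-k) * w^(n-k))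
      = dcoef a b c k * dcoef p 1 1 (n-k) * (w^k * w^(n-k)) := by ring
    _ = dcoef a b c k * dcoef p 1 1 (n-k) * w^n := by rw [hpow]

lemma hyper_B_mul {p q w : ℝ} (hw : |w| < 1) :
    hyperF p 1 1 w * hyperF q 1 1 w = hyperF (p+q) 1 1 w := by
  rw [cauchy_hyper one_pos hw, hyperF_eq]
  apply tsum_congr
  intro n
  congr 1
  have hfn : ((n.factorial : ℕ) : ℝ) ≠ 0 := by positivity
  rw [dcoef_B, ← chu_vandermonde p q n, Finset.sum_div]
  apply Finset.sum_congr rfl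
  intro k hk
  have hkn : k ≤ n := Nat.lt_succ_iff.mp (Finset.mem_range.mp hk)
  rw [dcoef_B, dcoef_B, chuT]
  have hfact : (n.factorial : ℝ) = (n.choose k : ℝ) * k.factorial * (n-k).factorial := by
    exact_mod_cast (Nat.choose_mul_factorial_mul_factorial hkn).symm
  rw [hfact]
  have h1 : (k.factorial : ℝ) ≠ 0 := by positivity
  have h2 : ((n-k).factorial : ℝ) ≠ 0 := by positivity
  have h3 : (n.choose k : ℝ) ≠ 0 := by
    have := Nat.choose_pos hkn
    positivity
  field_simp

lemma hyper_B_zero {w : ℝ} : hyperF 0 1 1 w = 1 := by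
  rw [hyperF_eq]
  rw [tsum_eq_single 0]
  · simp [dcoef, poch_zero]
  · intro n hn
    match n with
    | 0 => exact absurd rfl hn
    | (m+1) =>
      have hz : poch 0 (m+1) = 0 := by
        apply Finset.prod_eq_zero (Finset.mem_range.mpr (Nat.succ_pos m))
        norm_num
      simp [dcoef, hz]

lemma hyper_B_sq_nonneg (t w : ℝ) (hw : |w| < 1) : 0 ≤ hyperF t 1 1 w := by
  have h := hyper_B_mul (p := t/2) (q := t/2) hw
  rw [show t/2 + t/2 = t from by ring] at h
  rw [← h]
  exact mul_self_nonneg _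

lemma euler_transform {x0 y0 c w : ℝ} (hc : 0 < c) (hw : |w| < 1) :
    hyperF (c-x0) (c-y0) c w * hyperF (x0+y0-c) 1 1 w = hyperF x0 y0 c w := by
  rw [cauchy_hyper hc hw, hyperF_eq]
  apply tsum_congr
  intro n
  congr 1
  conv_rhs => rw [dcoef]
  rw [← saalschutz x0 y0 c n, Finset.sum_div]
  apply Finset.sum_congr rfl
  intro k hk
  have hkn : k ≤ n := Nat.lt_succ_iff.mp (Finset.mem_range.mp hk)
  rw [dcoef_B]
  simp only [dcoef, sT]
  have hsplit : poch c n = poch c k * poch (c+k) (n-k) := by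
    have h := poch_add c k (n-k)
    rw [show k + (n-k) = n from by omega] at h
    exact h
  have hfact : (n.factorial : ℝ) = (n.choose k : ℝ) * k.factorial * (n-k).factorial := by
    exact_mod_cast (Nat.choose_mul_factorial_mul_factorial hkn).symm
  rw [hsplit, hfact]
  have h1 : (k.factorial : ℝ) ≠ 0 := by positivity
  have h2 : ((n-k).factorial : ℝ) ≠ 0 := by positivity
  have h3 : (n.choose k : ℝ) ≠ 0 := by
    have := Nat.choose_pos hkn
    positivity
  have h4 : poch c k ≠ 0 := ne_of_gt (poch_pos hc k)
  have h5 : poch (c+k) (n-k) ≠ 0 := by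
    apply ne_of_gt (poch_pos _ _)
    have : (0:ℝ) ≤ (k:ℝ) := Nat.cast_nonneg k
    linarith
  field_simp

lemma hyperF_nonneg_of_nonneg {x0 y0 c w : ℝ} (hx0 : 0 ≤ x0) (hy0 : 0 ≤ y0) (hc : 0 < c)
    (hw0 : 0 ≤ w) : 0 ≤ hyperF x0 y0 c w := by
  rw [hyperF_eq]
  apply tsum_nonneg
  intro n
  have h1 := poch_nonneg hx0 n
  have h2 := poch_nonneg hy0 n
  have h3 := poch_pos hc n
  have h4 : (0:ℝ) < (n.factorial : ℝ) := by positivity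
  apply mul_nonneg _ (pow_nonneg hw0 n)
  rw [dcoef]
  positivity

/-- Key positivity: F(a+2, b; c; w) ≥ 0. -/
lemma hyperF_pos_key {a b c w : ℝ} (hc : 0 < c) (hbc : b ≤ c) (ha2 : a + 2 ≤ c)
    (hw0 : 0 ≤ w) (hw1 : w < 1) : 0 ≤ hyperF (a+2) b c w := by
  have hw : |w| < 1 := by rw [abs_of_nonneg hw0]; exact hw1
  set x0 : ℝ := c - (a+2) with hx0def
  set y0 : ℝ := c - b with hy0def
  set s : ℝ := x0 + y0 - c with hsdef
  have e1 : a + 2 = c - x0 := by rw [hx0def]; ring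
  have e2 : b = c - y0 := by rw [hy0def]; ring
  rw [e1, e2]
  have hP4 : hyperF s 1 1 w * hyperF (-s) 1 1 w = 1 := by
    rw [hyper_B_mul hw, show s + -s = 0 from by ring, hyper_B_zero]
  calc (0:ℝ) ≤ hyperF x0 y0 c w * hyperF (-s) 1 1 w := by
        apply mul_nonneg
        · exact hyperF_nonneg_of_nonneg (by rw [hx0def]; linarith) (by rw [hy0def]; linarith) hc hw0
        · exact hyper_B_sq_nonneg _ _ hw
    _ = (hyperF (c-x0) (c-y0) c w * hyperF s 1 1 w) * hyperF (-s) 1 1 w := by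
        rw [euler_transform hc hw]
    _ = hyperF (c-x0) (c-y0) c w * (hyperF s 1 1 w * hyperF (-s) 1 1 w) := by ring
    _ = hyperF (c-x0) (c-y0) c w := by rw [hP4, mul_one]

/-! ### Assembly -/

lemma poch_shift2 (a : ℝ) (n : ℕ) :
    poch a n * ((a+(n:ℝ)) * ((a+(n:ℝ))+1)) = a*(a+1) * poch (a+2) n := by
  have h1 : poch a (n+2) = poch a n * ((a+(n:ℝ)) * ((a+(n:ℝ))+1)) := by
    rw [show n+2 = (n+1)+1 from rfl, poch_succ, poch_succ]
    push_cast
    ring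
  have h2 : poch a (n+2) = a*(a+1) * poch (a+2) n := by
    have h := poch_add a 2 n
    rw [show 2+n = n+2 from by omega] at h
    rw [h, show poch a 2 = a*(a+1) from by
      rw [show (2:ℕ) = 1+1 from rfl, poch_succ, poch_one]; push_cast; ring]
    norm_num
  linarith

lemma bound_shift {d : ℕ → ℝ} {K : ℝ} {m : ℕ} (hd : ∀ n, |d n| ≤ K * ((n:ℝ)+1)^m) (t : ℝ) :
    ∀ n, |d n * (t - (n:ℝ))| ≤ (K*(|t|+1)) * ((n:ℝ)+1)^(m+1) := by
  intro n
  rw [abs_mul]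
  have hK0 : 0 ≤ K := by
    have h0 := hd 0
    have h1 := abs_nonneg (d 0)
    simp at h0
    linarith
  have h1 : |t - (n:ℝ)| ≤ (|t|+1)*((n:ℝ)+1) := by
    have h2 : |t - (n:ℝ)| ≤ |t| + (n:ℝ) := by
      refine (abs_sub _ _).trans ?_
      simp [Nat.abs_cast]
    nlinarith [abs_nonneg t, Nat.cast_nonneg (α := ℝ) n]
  calc |d n| * |t - (n:ℝ)| ≤ (K*((n:ℝ)+1)^m) * ((|t|+1)*((n:ℝ)+1)) :=
        mul_le_mul (hd n) h1 (abs_nonneg _) (by positivity)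
    _ = (K*(|t|+1)) * ((n:ℝ)+1)^(m+1) := by rw [pow_succ]; ring

lemma g2_eq {a b c : ℝ} (hc : 0 < c) {x : ℝ} (hx : 1 < x) :
    (∑' n : ℕ, dcoef a b c n * (-a - (n:ℝ)) * (-a-1 - (n:ℝ)) * x ^ (-a-1-1 - (n:ℝ)))
    = a*(a+1) * (x ^ (-a-1-1) * hyperF (a+2) b c x⁻¹) := by
  have hx0 : (0:ℝ) < x := by linarith
  rw [hyperF_eq]
  calc (∑' n : ℕ, dcoef a b c n * (-a - (n:ℝ)) * (-a-1 - (n:ℝ)) * x ^ (-a-1-1 - (n:ℝ)))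
      = ∑' n : ℕ, (a*(a+1)) * (x^(-a-1-1) * (dcoef (a+2) b c n * (x⁻¹)^n)) := by
        apply tsum_congr
        intro n
        have hsplit : x ^ (-a-1-1 - (n:ℝ)) = x^(-a-1-1) * (x⁻¹)^n := by
          rw [show (-a-1-1 - (n:ℝ)) = (-a-1-1) + (-(n:ℝ)) from by ring, Real.rpow_add hx0,
            Real.rpow_neg hx0.le (n:ℝ), Real.rpow_natCast, ← inv_pow]
        rw [hsplit]
        have hD : poch c n * (n.factorial:ℝ) ≠ 0 := by
          have := poch_pos hc n
          positivity
        have hco : dcoef a b c n * ((a+(n:ℝ)) * ((a+(n:ℝ))+1)) = a*(a+1) * dcoef (a+2) b c n := by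
          simp only [dcoef]
          rw [div_mul_eq_mul_div, ← mul_div_assoc, div_left_inj' hD]
          linear_combination (poch b n) * poch_shift2 a n
        linear_combination (x^(-a-1-1) * (x⁻¹)^n) * hco
    _ = (a*(a+1)) * ∑' n : ℕ, x^(-a-1-1) * (dcoef (a+2) b c n * (x⁻¹)^n) := tsum_mul_left
    _ = a*(a+1) * (x ^ (-a-1-1) * ∑' n : ℕ, dcoef (a+2) b c n * (x⁻¹)^n) := by
        rw [tsum_mul_left]

lemma F_eq_G {a b c : ℝ} {z : ℝ} (hz : 1 < z) :
    z ^ (-a) * hyperF a b c z⁻¹ = ∑' n : ℕ, dcoef a b c n * z ^ (-a - (n:ℝ)) := by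
  have hz0 : (0:ℝ) < z := by linarith
  rw [hyperF_eq, ← tsum_mul_left]
  apply tsum_congr
  intro n
  have hsplit : z ^ (-a - (n:ℝ)) = z^(-a) * (z⁻¹)^n := by
    rw [show (-a - (n:ℝ)) = (-a) + (-(n:ℝ)) from by ring, Real.rpow_add hz0,
      Real.rpow_neg hz0.le (n:ℝ), Real.rpow_natCast, ← inv_pow]
  rw [hsplit]
  ring

theorem hyperF_mod_convex_concave (a b c : ℝ) (hc : 0 < c) (hac : a ≤ c) (hbc : b ≤ c)
    (ha2 : a + 2 ≤ c) :
    (0 ≤ a * (a + 1) →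
      ConvexOn ℝ (Set.Ioi (1 : ℝ)) (fun z => z ^ (-a) * hyperF a b c z⁻¹)) ∧
    (a * (a + 1) ≤ 0 →
      ConcaveOn ℝ (Set.Ioi (1 : ℝ)) (fun z => z ^ (-a) * hyperF a b c z⁻¹)) := by
  have hIoi : interior (Set.Ioi (1:ℝ)) = Set.Ioi 1 := interior_Ioi
  set A : ℕ := ⌈|a|⌉₊ with hA
  set B : ℕ := ⌈|b|⌉₊ with hB
  have hd : ∀ n : ℕ, |dcoef a b c n| ≤ (max 1 c⁻¹) * ((n:ℝ)+1)^(A+B+1) := by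
    intro n
    have h := coeff_bound hc A B (Nat.le_ceil _) (Nat.le_ceil _) n
    have e : (((n:ℕ)+1:ℕ):ℝ) = (n:ℝ)+1 := by push_cast; ring
    rw [← e]
    exact_mod_cast h
  have hd1 := bound_shift hd (-a)
  set f' : ℝ → ℝ := fun x => ∑' n : ℕ, dcoef a b c n * (-a - (n:ℝ)) * x ^ (-a - 1 - (n:ℝ))
    with hf'def
  set f'' : ℝ → ℝ := fun x => a*(a+1) * (x ^ (-a-1-1) * hyperF (a+2) b c x⁻¹) with hf''def
  have hF' : ∀ x ∈ Set.Ioi (1:ℝ), HasDerivAt (fun z : ℝ => z ^ (-a) * hyperF a b c z⁻¹) (f' x) x := by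
    intro x hx
    have hx1 : (1:ℝ) < x := hx
    have hG : HasDerivAt (fun z : ℝ => ∑' n : ℕ, dcoef a b c n * z ^ (-a - (n:ℝ))) (f' x) x :=
      hasDerivAt_psum hd (-a) hx1
    apply hG.congr_of_eventuallyEq
    filter_upwards [isOpen_Ioi.mem_nhds hx] with z hz
    exact F_eq_G hz
  have hF'' : ∀ x ∈ Set.Ioi (1:ℝ), HasDerivAt f' (f'' x) x := by
    intro x hx
    have hx1 : (1:ℝ) < x := hx
    have h := hasDerivAt_psum (d := fun n : ℕ => dcoef a b c n * (-a - (n:ℝ))) hd1 (-a - 1) hx1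
    have hval : (∑' n : ℕ, dcoef a b c n * (-a - (n:ℝ)) * (-a - 1 - (n:ℝ)) * x ^ (-a-1-1 - (n:ℝ)))
        = f'' x := g2_eq hc hx1
    rw [← hval]
    exact h
  have hsign : ∀ x ∈ Set.Ioi (1:ℝ), 0 ≤ x ^ (-a-1-1) * hyperF (a+2) b c x⁻¹ := by
    intro x hx
    have hx1 : (1:ℝ) < x := hx
    have hx0 : (0:ℝ) < x := by linarith
    apply mul_nonneg (le_of_lt (Real.rpow_pos_of_pos hx0 _))
    have hinv1 : x⁻¹ < 1 := by rw [inv_lt_one_iff₀]; right; exact hx1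
    exact hyperF_pos_key hc hbc ha2 (inv_nonneg.mpr hx0.le) hinv1
  have hcont : ContinuousOn (fun z : ℝ => z ^ (-a) * hyperF a b c z⁻¹) (Set.Ioi (1:ℝ)) :=
    fun x hx => (hF' x hx).continuousAt.continuousWithinAt
  have hdw1 : ∀ x ∈ interior (Set.Ioi (1:ℝ)),
      HasDerivWithinAt (fun z : ℝ => z ^ (-a) * hyperF a b c z⁻¹) (f' x) (interior (Set.Ioi (1:ℝ))) x := by
    rw [hIoi]
    intro x hx
    exact (hF' x hx).hasDerivWithinAt
  have hdw2 : ∀ x ∈ interior (Set.Ioi (1:ℝ)),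
      HasDerivWithinAt f' (f'' x) (interior (Set.Ioi (1:ℝ))) x := by
    rw [hIoi]
    intro x hx
    exact (hF'' x hx).hasDerivWithinAt
  constructor
  · intro hcase
    apply convexOn_of_hasDerivWithinAt2_nonneg (convex_Ioi 1) hcont hdw1 hdw2
    rw [hIoi]
    intro x hx
    exact mul_nonneg hcase (hsign x hx)
  · intro hcase
    apply concaveOn_of_hasDerivWithinAt2_nonpos (convex_Ioi 1) hcont hdw1 hdw2
    rw [hIoi]
    intro x hx
    exact mul_nonpos_iff.mpr (Or.inr ⟨hcase, hsign x hx⟩)
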